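/- For every δ ∈ [-1/4, 1/4] and every n ∈ ℤ, |σ(n+δ) - n| ≤ (0.4π - 1)·|δ|, where σ(x) = x - 0.2·sin(2πx), and 0 < 0.4π - 1 < 1. -/

import Mathlib

noncomputable def sigmaFn (x : ℝ) : ℝ := x - 0.2 * Real.sin (2 * Real.pi * x)

open Real

theorem sigmaFn_intCast_add (n : ℤ) (x : ℝ) : sigmaFn (n + x) = n + sigmaFn x := by
  have hsin : sin (2 * π * (n + x)) = sin (2 * π * x) := by
    rw [← sin_add_int_mul_two_pi (2 * π * x) n]
    ring_nf
  simp only [sigmaFn, hsin]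
  ring

theorem sigmaFn_neg (x : ℝ) : sigmaFn (-x) = -sigmaFn x := by
  simp only [sigmaFn, mul_neg, sin_neg]
  ring

/-- On `[0, 1/4]` Jordan's inequality gives `4δ ≤ sin (2πδ) ≤ 2πδ`, which traps `sigmaFn δ`
between `(1 - 0.4π) δ` and `0.2 δ`; the upper end is absorbed because `π ≥ 3`. -/
theorem abs_sigmaFn_le_of_nonneg {δ : ℝ} (h0 : 0 ≤ δ) (h1 : δ ≤ 1/4) :
    |sigmaFn δ| ≤ (0.4 * π - 1) * δ := by
  have hjordan : 4 * δ ≤ sin (2 * π * δ) := by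
    have h := mul_le_sin (x := 2 * π * δ) (by positivity) (by nlinarith [pi_pos])
    rwa [show 2 / π * (2 * π * δ) = 4 * δ by field_simp; ring] at h
  have hsin_le : sin (2 * π * δ) ≤ 2 * π * δ := sin_le (by positivity)
  rw [sigmaFn, abs_le]
  constructor <;> nlinarith [pi_gt_three]

theorem abs_sigmaFn_le {δ : ℝ} (hδ : |δ| ≤ 1/4) : |sigmaFn δ| ≤ (0.4 * π - 1) * |δ| := by
  rcases le_total 0 δ with h | h
  · rw [abs_of_nonneg h] at hδ ⊢
    exact abs_sigmaFn_le_of_nonneg h hδ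
  · rw [abs_of_nonpos h] at hδ ⊢
    rw [← abs_neg, ← sigmaFn_neg]
    exact abs_sigmaFn_le_of_nonneg (neg_nonneg.mpr h) hδ

theorem stmt_3 :
    (0 < 0.4 * Real.pi - 1) ∧ (0.4 * Real.pi - 1 < 1) ∧
    ∀ δ : ℝ, δ ∈ Set.Icc (-(1/4) : ℝ) (1/4) → ∀ n : ℤ,
      |sigmaFn (n + δ) - n| ≤ (0.4 * Real.pi - 1) * |δ| := by
  refine ⟨by linarith [pi_gt_three], by linarith [pi_lt_d2], ?_⟩
  rintro δ ⟨hlo, hhi⟩ n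
  rw [sigmaFn_intCast_add, add_sub_cancel_left]
  exact abs_sigmaFn_le (abs_le.mpr ⟨hlo, hhi⟩)
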